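/- arXiv:cond-mat/0508737 — 2 statements merged into one kernel-verified Lean document; each statement's English description precedes it below -/
import Mathlib

section
/- Let X, Y : R → Fin 6 be rim colorings of the single-cell block B = {(0,0)} that differ at exactly one rim vertex. Then C_X and C_Y are nonempty, and there exists a coupling of the uniform distributions on C_X and C_Y whose expected Hamming distance is at most 0.50. -/
attribute [local instance] Classical.propDecidable

noncomputable section

/-- Grid adjacency on ℤ²: the ℓ¹-distance is 1. -/
def adjZ (u v : ℤ × ℤ) : Prop := (u.1 - v.1).natAbs + (u.2 - v.2).natAbs = 1

/-- The four grid neighbors of a point of ℤ². -/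
def nbrsZ (v : ℤ × ℤ) : Finset (ℤ × ℤ) :=
  {(v.1 + 1, v.2), (v.1 - 1, v.2), (v.1, v.2 + 1), (v.1, v.2 - 1)}

/-- The rim of a block B ⊆ ℤ²: the vertices outside B adjacent to some vertex of B. -/
def rimZ (B : Finset (ℤ × ℤ)) : Finset (ℤ × ℤ) := B.biUnion nbrsZ \ B

/-- The 6-colorings of the block B that are proper inside B and compatible with
the rim coloring X on the rim set R. -/
def CC (B R : Finset (ℤ × ℤ)) (X : ↥R → Fin 6) : Finset (↥B → Fin 6) :=
  Finset.univ.filter (fun c =>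
    (∀ u u' : ↥B, adjZ u.1 u'.1 → c u ≠ c u') ∧
    (∀ (u : ↥B) (v : ↥R), adjZ u.1 v.1 → c u ≠ X v))

/-- The Hamming distance between two colorings of the block B. -/
def hamming (B : Finset (ℤ × ℤ)) (c₁ c₂ : ↥B → Fin 6) : ℕ :=
  (Finset.univ.filter (fun u : ↥B => c₁ u ≠ c₂ u)).card

/-- μ is a coupling of the uniform distributions on the coloring sets of X and Y. -/
def IsCoupling (B R : Finset (ℤ × ℤ)) (X Y : ↥R → Fin 6)
    (μ : (↥B → Fin 6) → (↥B → Fin 6) → ℝ) : Prop :=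
  (∀ c₁ c₂, 0 ≤ μ c₁ c₂) ∧
  (∀ c₁ ∈ CC B R X, ∑ c₂ ∈ CC B R Y, μ c₁ c₂ = 1 / ((CC B R X).card : ℝ)) ∧
  (∀ c₂ ∈ CC B R Y, ∑ c₁ ∈ CC B R X, μ c₁ c₂ = 1 / ((CC B R Y).card : ℝ))

/-- The expected Hamming distance of a coupling μ. -/
def expHamming (B R : Finset (ℤ × ℤ)) (X Y : ↥R → Fin 6)
    (μ : (↥B → Fin 6) → (↥B → Fin 6) → ℝ) : ℝ :=
  ∑ c₁ ∈ CC B R X, ∑ c₂ ∈ CC B R Y, μ c₁ c₂ * (hamming B c₁ c₂ : ℝ)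

/-- The 1×1 block. -/
def B11 : Finset (ℤ × ℤ) := ({0} : Finset ℤ) ×ˢ ({0} : Finset ℤ)

/-! A coloring of the single cell is a color avoiding the four rim colors. Since `X` and `Y`
differ at one rim vertex, `C_X` and `C_Y` each have at most one element outside the other, and
together `X` and `Y` use at most five colors; so `k = |C_X ∩ C_Y| ≥ 1` and `|C_X|, |C_Y| ≤ k + 1`.
The maximal coupling of the two uniform distributions keeps mass at least `1 / (k + 1)` on the
diagonal at each common coloring, so it disagrees with probability at most `1 / (k + 1) ≤ 1 / 2`. -/

open Finset

lemma sum_mul_div_sum_eq_of_mem {α : Type*} {s t : Finset α} {p q : α → ℝ}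
    (hp : ∀ x ∈ s, 0 ≤ p x) (hpq : ∑ x ∈ t, q x = ∑ x ∈ s, p x) {a : α} (ha : a ∈ s) :
    ∑ b ∈ t, p a * q b / ∑ x ∈ s, p x = p a := by
  rw [← sum_div, ← mul_sum, hpq]
  by_cases hZ : ∑ x ∈ s, p x = 0
  · rw [(sum_eq_zero_iff_of_nonneg hp).1 hZ a ha, zero_mul, zero_div]
  · exact mul_div_cancel_right₀ _ hZ

/-- The maximal coupling of two weight functions of equal total mass: it puts the overlap
`min (f c) (g c)` on the diagonal and couples the residual masses independently. -/
theorem exists_coupling_offDiag_le {α : Type*} [DecidableEq α] (s t : Finset α)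
    {f g : α → ℝ} (hf : ∀ a, 0 ≤ f a) (hg : ∀ b, 0 ≤ g b) (hfg : ∑ a ∈ s, f a = ∑ b ∈ t, g b) :
    ∃ μ : α → α → ℝ, (∀ a b, 0 ≤ μ a b) ∧ (∀ a ∈ s, ∑ b ∈ t, μ a b = f a) ∧
      (∀ b ∈ t, ∑ a ∈ s, μ a b = g b) ∧
      ∑ a ∈ s, ∑ b ∈ t, (if a = b then 0 else μ a b) ≤
        ∑ a ∈ s, f a - ∑ c ∈ s ∩ t, min (f c) (g c) := by
  set d : α → ℝ := fun c => if c ∈ s ∩ t then min (f c) (g c) else 0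
  set p : α → ℝ := fun a => f a - d a
  set q : α → ℝ := fun b => g b - d b
  have hp : ∀ a, 0 ≤ p a := fun a => by
    simp only [p, d]; split_ifs <;> linarith [min_le_left (f a) (g a), hf a]
  have hq : ∀ b, 0 ≤ q b := fun b => by
    simp only [q, d]; split_ifs <;> linarith [min_le_right (f b) (g b), hg b]
  have hd_mem : ∀ c, (if c ∈ t then d c else 0) = d c ∧ (if c ∈ s then d c else 0) = d c :=
    fun c => by by_cases hs : c ∈ s <;> by_cases ht : c ∈ t <;> simp [d, hs, ht]
  have hsum_d : ∑ a ∈ s, d a = ∑ b ∈ t, d b := by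
    simp only [d, sum_ite_mem, ← inter_assoc, inter_self]
    rw [inter_right_comm, inter_self, inter_comm]
  set Z := ∑ a ∈ s, p a
  have hZ : ∑ b ∈ t, q b = Z := by
    simp only [Z, p, q, sum_sub_distrib, hfg, hsum_d]
  have hZ_eq : Z = ∑ a ∈ s, f a - ∑ c ∈ s ∩ t, min (f c) (g c) := by
    simp only [Z, p, d, sum_sub_distrib, sum_ite_mem, ← inter_assoc, inter_self]
  have hd0 : ∀ c, 0 ≤ d c := fun c => by
    simp only [d]; split_ifs; exacts [le_min (hf c) (hg c), le_rfl]
  have hrow : ∀ a ∈ s, ∑ b ∈ t, p a * q b / Z = p a := fun a ha =>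
    sum_mul_div_sum_eq_of_mem (fun x _ => hp x) hZ ha
  have hcol : ∀ b ∈ t, ∑ a ∈ s, p a * q b / Z = q b := fun b hb => by
    simp_rw [mul_comm (p _), ← hZ]
    exact sum_mul_div_sum_eq_of_mem (fun x _ => hq x) hZ.symm hb
  refine ⟨fun a b => (if a = b then d a else 0) + p a * q b / Z, ?_, ?_, ?_, ?_⟩
  · exact fun a b => add_nonneg (by split_ifs; exacts [hd0 a, le_rfl])
      (div_nonneg (mul_nonneg (hp a) (hq b)) (sum_nonneg fun a _ => hp a))
  · intro a ha
    rw [sum_add_distrib, sum_ite_eq, (hd_mem a).1, hrow a ha]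
    exact add_sub_cancel _ _
  · intro b hb
    rw [sum_add_distrib, sum_ite_eq', (hd_mem b).2, hcol b hb]
    exact add_sub_cancel _ _
  · calc ∑ a ∈ s, ∑ b ∈ t, (if a = b then 0 else (if a = b then d a else 0) + p a * q b / Z)
        ≤ ∑ a ∈ s, ∑ b ∈ t, p a * q b / Z := by
          gcongr with a _ b _
          split_ifs
          · exact div_nonneg (mul_nonneg (hp a) (hq b)) (sum_nonneg fun a _ => hp a)
          · rw [zero_add]
      _ = Z := sum_congr rfl hrow
      _ = _ := hZ_eq

theorem exists_uniform_coupling_offDiag_le {α : Type*} [DecidableEq α] {s t : Finset α}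
    (hs : s.Nonempty) (ht : t.Nonempty) (hst : #s ≤ #(s ∩ t) + 1) (hts : #t ≤ #(s ∩ t) + 1) :
    ∃ μ : α → α → ℝ, (∀ a b, 0 ≤ μ a b) ∧ (∀ a ∈ s, ∑ b ∈ t, μ a b = 1 / (#s : ℝ)) ∧
      (∀ b ∈ t, ∑ a ∈ s, μ a b = 1 / (#t : ℝ)) ∧
      ∑ a ∈ s, ∑ b ∈ t, (if a = b then 0 else μ a b) ≤ 1 / ((#(s ∩ t) : ℝ) + 1) := by
  have hs0 : (0 : ℝ) < #s := by exact_mod_cast hs.card_pos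
  have ht0 : (0 : ℝ) < #t := by exact_mod_cast ht.card_pos
  have hmass : ∀ {u : Finset α}, (0 : ℝ) < #u → ∑ _ ∈ u, 1 / (#u : ℝ) = 1 := fun hu => by
    rw [sum_const, nsmul_eq_mul, mul_one_div_cancel hu.ne']
  obtain ⟨μ, hμ0, hrow, hcol, hoff⟩ := exists_coupling_offDiag_le s t
    (fun _ => (one_div_pos.2 hs0).le) (fun _ => (one_div_pos.2 ht0).le)
    ((hmass hs0).trans (hmass ht0).symm)
  refine ⟨μ, hμ0, hrow, hcol, hoff.trans ?_⟩
  have hmin : 1 / ((#(s ∩ t) : ℝ) + 1) ≤ min (1 / (#s : ℝ)) (1 / #t) :=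
    le_min (one_div_le_one_div_of_le hs0 (by exact_mod_cast hst))
      (one_div_le_one_div_of_le ht0 (by exact_mod_cast hts))
  set k : ℝ := ((s ∩ t).card : ℝ)
  have hk : 0 ≤ k := Nat.cast_nonneg _
  rw [hmass hs0, sum_const, nsmul_eq_mul]
  calc 1 - k * min (1 / (#s : ℝ)) (1 / #t) ≤ 1 - k * (1 / (k + 1)) := by gcongr
    _ = 1 / (k + 1) := by field_simp; ring

section Hamming

variable {B : Finset (ℤ × ℤ)}

lemma hamming_self (c : ↥B → Fin 6) : hamming B c c = 0 := by
  simp [hamming]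

lemma hamming_le_card (c₁ c₂ : ↥B → Fin 6) : hamming B c₁ c₂ ≤ #B :=
  (card_filter_le _ _).trans_eq (by rw [card_univ, Fintype.card_coe])

lemma expHamming_le_card_mul_offDiag {R : Finset (ℤ × ℤ)} {X Y : ↥R → Fin 6}
    {μ : (↥B → Fin 6) → (↥B → Fin 6) → ℝ} (hμ : ∀ c₁ c₂, 0 ≤ μ c₁ c₂) :
    expHamming B R X Y μ ≤
      #B * ∑ c₁ ∈ CC B R X, ∑ c₂ ∈ CC B R Y, (if c₁ = c₂ then 0 else μ c₁ c₂) := by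
  simp only [expHamming, mul_sum]
  refine sum_le_sum fun c₁ _ => sum_le_sum fun c₂ _ => ?_
  split_ifs with h
  · simp [h, hamming_self]
  · rw [mul_comm]
    gcongr
    · exact hμ c₁ c₂
    · exact_mod_cast hamming_le_card c₁ c₂

end Hamming

section SingleCell

def origin : ↥B11 := ⟨(0, 0), by simp [B11]⟩

lemma eq_origin (u : ↥B11) : u = origin := by
  obtain ⟨p, hp⟩ := u
  simp only [B11, mem_product, mem_singleton] at hp
  exact Subtype.ext (Prod.ext hp.1 hp.2)

lemma card_B11 : #B11 = 1 := by decide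

lemma rimZ_B11 : rimZ B11 = {(1, 0), (-1, 0), (0, 1), (0, -1)} := by decide

lemma card_rimZ_B11 : #(rimZ B11) = 4 := by rw [rimZ_B11]; decide

lemma adjZ_origin_of_mem_rimZ {v : ℤ × ℤ} (hv : v ∈ rimZ B11) : adjZ (0, 0) v := by
  simp only [rimZ_B11, mem_insert, mem_singleton] at hv
  rcases hv with rfl | rfl | rfl | rfl <;> simp [adjZ]

lemma mem_CC_B11_iff {X : ↥(rimZ B11) → Fin 6} {c : ↥B11 → Fin 6} :
    c ∈ CC B11 (rimZ B11) X ↔ ∀ v, c origin ≠ X v := by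
  simp only [CC, mem_filter, mem_univ, true_and]
  refine ⟨fun h v => h.2 origin v (adjZ_origin_of_mem_rimZ v.2), fun h => ⟨?_, ?_⟩⟩
  · intro u u' hadj
    rw [eq_origin u, eq_origin u'] at hadj
    simp [origin, adjZ] at hadj
  · intro u v _
    rw [eq_origin u]
    exact h v

variable {X Y : ↥(rimZ B11) → Fin 6} {v₀ : ↥(rimZ B11)}

lemma CC_B11_sdiff_subset (hXY : ∀ u ≠ v₀, X u = Y u) :
    CC B11 (rimZ B11) X \ CC B11 (rimZ B11) Y ⊆ {fun _ => Y v₀} := by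
  intro c hc
  obtain ⟨hcX, hcY⟩ := mem_sdiff.1 hc
  simp only [mem_CC_B11_iff, not_forall, not_not] at hcX hcY
  obtain ⟨v, hv⟩ := hcY
  obtain rfl : v = v₀ := by
    by_contra hne
    exact hcX v (hv.trans (hXY v hne).symm)
  exact mem_singleton.2 (funext fun u => eq_origin u ▸ hv)

lemma card_CC_B11_le (hXY : ∀ u ≠ v₀, X u = Y u) :
    #(CC B11 (rimZ B11) X) ≤ #(CC B11 (rimZ B11) X ∩ CC B11 (rimZ B11) Y) + 1 := by
  rw [← card_inter_add_card_sdiff _ (CC B11 (rimZ B11) Y)]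
  gcongr
  exact card_le_one_iff_subset_singleton.2 ⟨_, CC_B11_sdiff_subset hXY⟩

/-- The rim colorings together use at most `4 + 1 < 6` colors, so a free color is left. -/
lemma CC_B11_inter_nonempty (hXY : ∀ u ≠ v₀, X u = Y u) :
    (CC B11 (rimZ B11) X ∩ CC B11 (rimZ B11) Y).Nonempty := by
  have hcard : #(insert (Y v₀) (univ.image X)) < #(univ : Finset (Fin 6)) :=
    calc #(insert (Y v₀) (univ.image X)) ≤ #(univ.image X) + 1 := card_insert_le _ _
      _ ≤ #(univ : Finset ↥(rimZ B11)) + 1 := by gcongr; exact card_image_le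
      _ < #(univ : Finset (Fin 6)) := by simp [card_rimZ_B11]
  obtain ⟨k, -, hk⟩ := exists_mem_notMem_of_card_lt_card hcard
  simp only [mem_insert, mem_image, mem_univ, true_and, not_or, not_exists] at hk
  refine ⟨fun _ => k, mem_inter.2 ⟨mem_CC_B11_iff.2 fun v h => hk.2 v h.symm,
    mem_CC_B11_iff.2 fun v h => ?_⟩⟩
  by_cases hv : v = v₀
  · exact hk.1 (hv ▸ h)
  · exact hk.2 v ((hXY v hv).trans h.symm)

end SingleCell

theorem coupling_block_12 (X Y : ↥(rimZ B11) → Fin 6)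
    (hXY : ∃ v₀, X v₀ ≠ Y v₀ ∧ ∀ u, u ≠ v₀ → X u = Y u) :
    (CC B11 (rimZ B11) X).Nonempty ∧ (CC B11 (rimZ B11) Y).Nonempty ∧
    ∃ μ : (↥B11 → Fin 6) → (↥B11 → Fin 6) → ℝ,
      IsCoupling B11 (rimZ B11) X Y μ ∧
      expHamming B11 (rimZ B11) X Y μ ≤ 0.50 := by
  obtain ⟨v₀, -, hXY⟩ := hXY
  have hI := CC_B11_inter_nonempty hXY
  have hX := hI.mono inter_subset_left
  have hY := hI.mono inter_subset_right
  obtain ⟨μ, hμ0, hrow, hcol, hoff⟩ := exists_uniform_coupling_offDiag_le hX hY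
    (card_CC_B11_le hXY) (inter_comm (CC _ _ Y) _ ▸ card_CC_B11_le fun u hu => (hXY u hu).symm)
  refine ⟨hX, hY, μ, ⟨hμ0, hrow, hcol⟩, ?_⟩
  have hk : (1 : ℝ) ≤ #(CC B11 (rimZ B11) X ∩ CC B11 (rimZ B11) Y) := by
    exact_mod_cast hI.card_pos
  calc expHamming B11 (rimZ B11) X Y μ
      ≤ #B11 * ∑ c₁ ∈ CC B11 (rimZ B11) X, ∑ c₂ ∈ CC B11 (rimZ B11) Y,
          (if c₁ = c₂ then 0 else μ c₁ c₂) := expHamming_le_card_mul_offDiag hμ0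
    _ ≤ 1 * (1 / ((#(CC B11 (rimZ B11) X ∩ CC B11 (rimZ B11) Y) : ℝ) + 1)) := by
      rw [card_B11, Nat.cast_one]; gcongr
    _ ≤ 0.50 := by rw [one_mul, div_le_iff₀ (by positivity)]; linarith
end
end

section
/- Let G be a finite simple graph with maximum degree at most Δ and let q ≥ Δ + 2. Let x and y be proper q-colorings of G and let D = {v : x(v) ≠ y(v)} have cardinality m. Then there exists a sequence of proper q-colorings x = z₀, z₁, …, z_k = y with k ≤ m·(Δ + 1) such that for each 0 ≤ i < k, the colorings z_i and z_{i+1} differ at exactly one vertex, and every z_i agrees with x (equivalently with y) on all vertices outside D. -/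
/-!
Recolour the vertices of `D` one at a time. To give a vertex `v` its target colour `c = y v`,
first move every neighbour currently coloured `c` to a colour that is different from `c` and
from the colours of its own at most `Δ` neighbours (possible since `q ≥ Δ + 2`); then `v` can
take colour `c`. Such a neighbour `u` lies in `D`, because `y u ≠ y v = c`. This costs at most
`Δ + 1` moves per vertex, and no vertex outside `D` is ever touched.
-/

attribute [local instance] Classical.propDecidable

open Finset

namespace SimpleGraph

variable {V α : Type*} {G : SimpleGraph V}

noncomputable def Coloring.update (C : G.Coloring α) (v : V) (c : α)
    (h : ∀ w, G.Adj v w → C w ≠ c) : G.Coloring α :=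
  Coloring.mk (Function.update C v c) fun {a b} hab => by
    by_cases ha : a = v <;> by_cases hb : b = v
    · subst ha hb; exact (G.irrefl hab).elim
    · subst ha; simpa [hb] using (h b hab).symm
    · subst hb; simpa [ha] using h a hab.symm
    · simpa [ha, hb] using C.valid hab

@[simp]
theorem Coloring.coe_update (C : G.Coloring α) (v : V) (c : α)
    (h : ∀ w, G.Adj v w → C w ≠ c) : ⇑(C.update v c h) = Function.update C v c :=
  rfl

def glauberGraph (G : SimpleGraph V) (α : Type*) (U : Set V) : SimpleGraph (G.Coloring α) where
  Adj C C' := ∃ v ∈ U, C v ≠ C' v ∧ ∀ w ≠ v, C w = C' w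
  symm := ⟨fun _ _ ⟨v, hv, hne, heq⟩ => ⟨v, hv, hne.symm, fun w hw => (heq w hw).symm⟩⟩
  loopless := ⟨fun _ ⟨_, _, hne, _⟩ => hne rfl⟩

variable {U U' : Set V} {C C' : G.Coloring α} {v : V} {c : α}

theorem glauberGraph_mono (h : U ⊆ U') : glauberGraph G α U ≤ glauberGraph G α U' :=
  fun _ _ ⟨_, hv, hne, heq⟩ => ⟨_, h hv, hne, heq⟩

theorem glauberGraph.existsUnique_ne_of_adj (h : (glauberGraph G α U).Adj C C') :
    ∃! v, C v ≠ C' v :=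
  let ⟨v, _, hne, heq⟩ := h
  ⟨v, hne, fun w hw => by_contra fun hwv => hw (heq w hwv)⟩

theorem glauberGraph.apply_eq_of_adj_of_notMem (h : (glauberGraph G α U).Adj C C') {w : V}
    (hw : w ∉ U) : C w = C' w :=
  let ⟨_, hv, _, heq⟩ := h
  heq w fun hwv => hw (hwv ▸ hv)

theorem glauberGraph_adj_update (hv : v ∈ U) (hc : C v ≠ c)
    (h : ∀ w, G.Adj v w → C w ≠ c) : (glauberGraph G α U).Adj C (C.update v c h) :=
  ⟨v, hv, by simpa using hc, fun _ hw => by simp [hw]⟩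

theorem Walk.apply_eq_of_mem_support_glauberGraph {D : G.Coloring α}
    (p : (glauberGraph G α U).Walk C C') (hD : D ∈ p.support) {w : V} (hw : w ∉ U) :
    D w = C w := by
  induction p with
  | nil => rw [List.mem_singleton.mp hD]
  | cons hadj p ih =>
    rcases List.mem_cons.mp hD with rfl | hD
    · rfl
    · exact (ih hD).trans (glauberGraph.apply_eq_of_adj_of_notMem hadj hw).symm

theorem exists_walk_to_apply_eq_of_forall_adj_ne (hv : v ∈ U)
    (h : ∀ w, G.Adj v w → C w ≠ c) :
    ∃ C₁ : G.Coloring α, C₁ v = c ∧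
      ∃ p : (glauberGraph G α U).Walk C C₁, p.length ≤ 1 := by
  by_cases hc : C v = c
  · exact ⟨C, hc, .nil, zero_le_one⟩
  · exact ⟨C.update v c h, by simp, .cons (glauberGraph_adj_update hv hc h) .nil, le_rfl⟩

variable [Fintype α] [G.LocallyFinite]

theorem exists_ne_forall_adj_ne (f : V → α) {u : V} (h : G.degree u + 1 < Fintype.card α)
    (a : α) : ∃ c, c ≠ a ∧ ∀ w, G.Adj u w → f w ≠ c := by
  have hcard : #(insert a ((G.neighborFinset u).image f)) < #(univ : Finset α) :=
    calc _ ≤ #((G.neighborFinset u).image f) + 1 := card_insert_le _ _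
      _ ≤ G.degree u + 1 := Nat.add_le_add_right card_image_le 1
      _ < _ := by rwa [card_univ]
  obtain ⟨c, -, hc⟩ := exists_mem_notMem_of_card_lt_card hcard
  simp only [mem_insert, mem_image, mem_neighborFinset, not_or, not_exists, not_and] at hc
  exact ⟨c, hc.1, hc.2⟩

theorem exists_walk_to_apply_eq (hα : ∀ u, G.degree u + 1 < Fintype.card α) (hv : v ∈ U)
    (hU : ∀ u, G.Adj v u → C u = c → u ∈ U) {n : ℕ}
    (hn : #{u ∈ G.neighborFinset v | C u = c} ≤ n) :
    ∃ C₁ : G.Coloring α, C₁ v = c ∧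
      ∃ p : (glauberGraph G α U).Walk C C₁, p.length ≤ n + 1 := by
  induction n generalizing C with
  | zero =>
    have hempty := filter_eq_empty_iff.mp (card_eq_zero.mp (Nat.le_zero.mp hn))
    exact exists_walk_to_apply_eq_of_forall_adj_ne hv fun u hvu =>
      hempty ((mem_neighborFinset G v u).mpr hvu)
  | succ n ih =>
    by_cases hconflict : ∀ u, G.Adj v u → C u ≠ c
    · obtain ⟨C₁, h₁, p, hp⟩ := exists_walk_to_apply_eq_of_forall_adj_ne hv hconflict
      exact ⟨C₁, h₁, p, by omega⟩
    push Not at hconflict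
    obtain ⟨u, hvu, hu⟩ := hconflict
    obtain ⟨d, hdc, hd⟩ := exists_ne_forall_adj_ne C (hα u) c
    set C₂ := C.update u d hd
    have hC₂ : ∀ w, C₂ w = c → w ≠ u ∧ C w = c := fun w hw => by
      by_cases hwu : w = u
      · subst hwu; simp [C₂, hdc] at hw
      · simpa [C₂, hwu] using hw
    have hsub : {w ∈ G.neighborFinset v | C₂ w = c} ⊆
        {w ∈ G.neighborFinset v | C w = c}.erase u := fun w hw => by
        simp only [mem_filter, mem_erase] at hw ⊢
        exact ⟨(hC₂ w hw.2).1, hw.1, (hC₂ w hw.2).2⟩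
    have hmem : u ∈ {w ∈ G.neighborFinset v | C w = c} := by simp [hvu, hu]
    obtain ⟨C₁, h₁, p, hp⟩ := ih (C := C₂) (fun w hvw hw => hU w hvw (hC₂ w hw).2)
      ((card_le_card hsub).trans (by rw [card_erase_of_mem hmem]; omega))
    have hadj : (glauberGraph G α U).Adj C C₂ :=
      glauberGraph_adj_update (hU u hvu hu) (hu ▸ hdc.symm) hd
    exact ⟨C₁, h₁, .cons hadj p, by rw [Walk.length_cons]; omega⟩

theorem exists_walk_length_le_mul [Fintype V] {Δ : ℕ} (hΔ : ∀ v, G.degree v ≤ Δ)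
    (hα : Δ + 2 ≤ Fintype.card α) (C C' : G.Coloring α) {n : ℕ}
    (hn : #{v | C v ≠ C' v} ≤ n) :
    ∃ p : (glauberGraph G α {v | C v ≠ C' v}).Walk C C', p.length ≤ n * (Δ + 1) := by
  induction n generalizing C with
  | zero =>
    have hempty := filter_eq_empty_iff.mp (card_eq_zero.mp (Nat.le_zero.mp hn))
    obtain rfl : C = C' := DFunLike.ext _ _ fun v => not_not.mp (hempty (mem_univ v))
    exact ⟨.nil, by simp⟩
  | succ n ih =>
    by_cases hCC' : C = C'
    · subst hCC'
      exact ⟨.nil, Nat.zero_le _⟩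
    obtain ⟨v, hv⟩ : ∃ v, C v ≠ C' v := by
      by_contra! h
      exact hCC' (DFunLike.ext _ _ h)
    have hdeg : ∀ u, G.degree u + 1 < Fintype.card α := fun u => by have := hΔ u; omega
    have hU : ∀ u, G.Adj v u → C u = C' v → u ∈ {w | C w ≠ C' w} := fun u hvu hu => by
      rw [Set.mem_ofPred_eq, hu]
      exact C'.valid hvu
    obtain ⟨C₁, h₁, p₁, hp₁⟩ :=
      exists_walk_to_apply_eq hdeg hv hU (card_filter_le _ _ |>.trans (hΔ v))
    have hC₁ : ∀ w, C₁ w ≠ C' w → w ≠ v ∧ C w ≠ C' w := fun w hw => by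
      refine ⟨fun hwv => hw (hwv ▸ h₁), fun hCw => hw ?_⟩
      rw [p₁.apply_eq_of_mem_support_glauberGraph p₁.end_mem_support (not_not.mpr hCw), hCw]
    have hsub : ({w | C₁ w ≠ C' w} : Finset V) ⊆ ({w | C w ≠ C' w} : Finset V).erase v :=
      fun w hw => by
        simp only [mem_filter, mem_univ, true_and, mem_erase] at hw ⊢
        exact hC₁ w hw
    have hmem : v ∈ ({w | C w ≠ C' w} : Finset V) := by simp [hv]
    obtain ⟨p₂, hp₂⟩ :=
      ih C₁ ((card_le_card hsub).trans (by rw [card_erase_of_mem hmem]; omega))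
    refine ⟨p₁.append (p₂.mapLe (glauberGraph_mono fun w hw => (hC₁ w hw).2)), ?_⟩
    rw [Walk.length_append, Walk.length_mapLe, Nat.succ_mul]
    omega

end SimpleGraph

theorem glauber_path_between_colorings {V : Type} [Fintype V]
    (G : SimpleGraph V) (Δ q : ℕ) [DecidableRel G.Adj]
    (hΔ : ∀ v, G.degree v ≤ Δ) (hq : Δ + 2 ≤ q)
    (x y : V → Fin q)
    (hx : ∀ u v, G.Adj u v → x u ≠ x v) (hy : ∀ u v, G.Adj u v → y u ≠ y v) :
    ∃ (k : ℕ) (z : ℕ → V → Fin q),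
      z 0 = x ∧ z k = y ∧
      k ≤ (Finset.univ.filter (fun v => x v ≠ y v)).card * (Δ + 1) ∧
      (∀ i ≤ k, ∀ u v, G.Adj u v → z i u ≠ z i v) ∧
      (∀ i < k, ∃! v, z i v ≠ z (i + 1) v) ∧
      (∀ i ≤ k, ∀ v, x v = y v → z i v = x v) := by
  let Cx : G.Coloring (Fin q) := .mk x (hx _ _)
  let Cy : G.Coloring (Fin q) := .mk y (hy _ _)
  obtain ⟨p, hp⟩ :=
    SimpleGraph.exists_walk_length_le_mul hΔ (by rwa [Fintype.card_fin]) Cx Cy le_rfl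
  refine ⟨p.length, fun i => p.getVert i, congrArg DFunLike.coe p.getVert_zero,
    congrArg DFunLike.coe p.getVert_length, by convert hp <;> rfl,
    fun i _ u v huv => (p.getVert i).valid huv,
    fun i hi => SimpleGraph.glauberGraph.existsUnique_ne_of_adj (p.adj_getVert_succ hi),
    fun i _ v hv => ?_⟩
  exact p.apply_eq_of_mem_support_glauberGraph (p.getVert_mem_support i) (· hv)
end
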